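/- (Closed-form second-order average, Eqs. (7) and (9) of the paper.) Let 0 ≤ e < 1, η = √(1−e²), g ∈ ℝ, s ∈ ℝ, and let ℓ_e(f) = f − 2·arctan( e·sin f / (1 + η + e·cos f) ) − e·η·sin f / (1 + e·cos f). Define P(f) = P₁(f) + P₂(f) + P₃(f), where P₁(f) = (3/64)·(η²/(1+η))·( (1 + e·cos f)²/η⁴ )·S₁(f) with S₁(f) = Σ B_{i,j,k}·s^{2i}·η^k·e^{|j−2i|}·cos(j·f + 2·i·g), the sum running over exactly the following coefficients: for i = 0: B_{0,0,0} = B_{0,0,1} = 10(7s⁴−16s²+8), B_{0,0,2} = B_{0,0,3} = 2(5s⁴+8s²−8), B_{0,1,0} = 2(57s⁴−124s²+60), B_{0,1,1} = 4(15s⁴−44s²+24), B_{0,1,2} = 2(3s²−2)², B_{0,2,0} = 2(31s⁴−56s²+24), B_{0,2,1} = −2(5s⁴+8s²−8), B_{0,3,0} = 2(3s²−2)²; for i = 1: B_{1,−1,0} = 2−3s², B_{1,0,0} = B_{1,0,1} = 4(15s²−14), B_{1,1,0} = 3(37s²−38), B_{1,1,1} = 12(7s²−8), B_{1,1,2} =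 −5(3s²−2), B_{1,2,0} = B_{1,2,1} = −16(4s²−1), B_{1,2,2} = B_{1,2,3} = −8(s²−2), B_{1,3,0} = 150−221s², B_{1,3,1} = −4(35s²−24), B_{1,3,2} = 2−3s², B_{1,4,0} = −4(31s²−22), B_{1,4,1} = −4(13s²−10), B_{1,5,0} = −5(3s²−2); for i = 2: B_{2,2,0} = B_{2,2,1} = 5, B_{2,3,0} = B_{2,3,1} = 6, B_{2,4,0} = B_{2,4,1} = −6, B_{2,4,2} = B_{2,4,3} = −2, B_{2,5,0} = B_{2,5,1} = −10, B_{2,6,0} = B_{2,6,1} = −3; P₂(f) = (3/8)·η·[ η·(3s²−2)² + 3·(5s²−4)·s²·( e·cos(f+2g) + cos(2f+2g) + (e/3)·cos(3f+2g) ) ]; and P₃(f) = (9/8)·(5s²−4)·s²·( (1 + e·cos f)²/η² )·( f − ℓ_e(f) )·( e·sin(f+2g) + 2·sin(2f+2g) + e·sin(3f+2g) ). Then (1/(2π)) · ∫₀^{2π} P(f) · η³/(1 + e·cos f)² df = (3/32)·η·[ 5·(7s⁴−16s²+8) + η·(6s²−4)² + η²·(5s⁴+8s²−8) ] + (3/16)·η·(15s²−14)·s²·e²·cos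 2g. -/

import Mathlib

/-!
Multiplying `P` by `dℓ/df = η³ / (1 + e cos f)²` cancels every factor `(1 + e cos f)²`,
leaving a multiple of `S₁`, a multiple of `dℓ/df`, and `h · dℓ/df + (ℓ f - f) · h'`, where
`h = harmonicSum e g` is the trigonometric sum of `P₂` and `P₃` carries its derivative `h'`.
Over a period `S₁` integrates to its `f`-independent terms, `dℓ/df` to `ℓ (2π) - ℓ 0 = 2π`
and, since the equation of the center `f - ℓ f` vanishes at both ends, integration by parts
reduces the last part to `∫ h = 0`.
-/

open Real

noncomputable def meanAnomaly (e f : ℝ) : ℝ :=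
  f - 2 * arctan (e * sin f / (1 + √(1 - e ^ 2) + e * cos f))
    - e * √(1 - e ^ 2) * sin f / (1 + e * cos f)

noncomputable def harmonicSum (e g f : ℝ) : ℝ :=
  e * cos (f + 2 * g) + cos (2 * f + 2 * g) + e / 3 * cos (3 * f + 2 * g)

theorem one_add_mul_cos_pos {e : ℝ} (he : |e| < 1) (x : ℝ) : 0 < 1 + e * cos x := by
  have : |e * cos x| < 1 := by
    rw [abs_mul]
    exact (mul_le_of_le_one_right (abs_nonneg e) (abs_cos_le_one x)).trans_lt he
  linarith [neg_abs_le (e * cos x)]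

-- `2 arctan (e sin f / (1 + η + e cos f)) = f - E` for the eccentric anomaly `E`,
-- and `dE/df = η / (1 + e cos f)`.
theorem hasDerivAt_arctan_mul_sin_div {e η x : ℝ} (hη : η ^ 2 = 1 - e ^ 2) (hη₀ : 0 ≤ η)
    (hx : 0 < 1 + e * cos x) :
    HasDerivAt (fun f => arctan (e * sin f / (1 + η + e * cos f)))
      ((1 - η / (1 + e * cos x)) / 2) x := by
  have hd : 1 + η + e * cos x ≠ 0 := by linarith
  have hη₁ : 1 + η ≠ 0 := by linarith
  have hsc := sin_sq_add_cos_sq x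
  have hu := ((hasDerivAt_sin x).const_mul e).div
      (((hasDerivAt_cos x).const_mul e).const_add (1 + η)) hd
  refine hu.arctan.congr_deriv ?_
  have hden : 1 + (e * sin x / (1 + η + e * cos x)) ^ 2 =
      2 * (1 + η) * (1 + e * cos x) / (1 + η + e * cos x) ^ 2 := by
    field_simp
    linear_combination e ^ 2 * hsc + hη
  simp only [Pi.div_apply, hden]
  field_simp
  linear_combination e ^ 2 * hsc + hη

theorem hasDerivAt_meanAnomaly {e : ℝ} (he : |e| < 1) (x : ℝ) :
    HasDerivAt (meanAnomaly e) (√(1 - e ^ 2) ^ 3 / (1 + e * cos x) ^ 2) x := by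
  set η := √(1 - e ^ 2)
  have hη : η ^ 2 = 1 - e ^ 2 := sq_sqrt (sub_nonneg.2 (sq_le_one_iff_abs_le_one e |>.2 he.le))
  have hx := one_add_mul_cos_pos he x
  have hsc := sin_sq_add_cos_sq x
  have hv := ((hasDerivAt_sin x).const_mul (e * η)).div
      (((hasDerivAt_cos x).const_mul e).const_add 1) hx.ne'
  refine (((hasDerivAt_id x).sub
    ((hasDerivAt_arctan_mul_sin_div hη (sqrt_nonneg _) hx).const_mul 2)).sub hv).congr_deriv ?_
  have := hx.ne'
  field_simp
  linear_combination -(e ^ 2 * η) * hsc - η * hη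

theorem meanAnomaly_zero (e : ℝ) : meanAnomaly e 0 = 0 := by simp [meanAnomaly]

theorem meanAnomaly_two_pi (e : ℝ) : meanAnomaly e (2 * π) = 2 * π := by simp [meanAnomaly]

theorem integral_cos_mul_add_of_fract_eq_zero {k : ℝ} (hk : Int.fract k = 0) (a : ℝ) :
    ∫ x in (0 : ℝ)..2 * π, cos (k * x + a) = if k = 0 then 2 * π * cos a else 0 := by
  split_ifs with h0
  · simp [h0]
  · obtain ⟨n, rfl⟩ := Int.fract_eq_zero_iff.1 hk
    rw [intervalIntegral.integral_comp_mul_add (fun x => cos x) h0, integral_cos,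
      show (n : ℝ) * (2 * π) + a = a + n * (2 * π) by ring, sin_add_int_mul_two_pi]
    simp

theorem hasDerivAt_harmonicSum (e g x : ℝ) :
    HasDerivAt (harmonicSum e g)
      (-(e * sin (x + 2 * g) + 2 * sin (2 * x + 2 * g) + e * sin (3 * x + 2 * g))) x := by
  have h₁ := ((hasDerivAt_id' x).add_const (2 * g)).cos
  have h (k : ℝ) := (((hasDerivAt_id' x).const_mul k).add_const (2 * g)).cos
  refine (((h₁.const_mul e).add (h 2)).add ((h 3).const_mul (e / 3))).congr_deriv ?_
  ring

theorem integral_harmonicSum (e g : ℝ) : ∫ f in (0 : ℝ)..2 * π, harmonicSum e g f = 0 := by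
  simp (disch := (apply Continuous.intervalIntegrable; fun_prop)) only
    [harmonicSum, intervalIntegral.integral_add, intervalIntegral.integral_const_mul]
  simp (disch := norm_num) only [integral_cos_mul_add_of_fract_eq_zero]
  norm_num [add_comm (2 * π)]

theorem integral_mul_deriv_add_sub_mul_deriv {ℓ ℓ' C C' : ℝ → ℝ} {a b : ℝ}
    (hℓ : ∀ x, HasDerivAt ℓ (ℓ' x) x) (hC : ∀ x, HasDerivAt C (C' x) x)
    (hℓ' : Continuous ℓ') (hC' : Continuous C') (ha : ℓ a = a) (hb : ℓ b = b) :
    ∫ x in a..b, (C x * ℓ' x + (ℓ x - x) * C' x) = ∫ x in a..b, C x := by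
  have hCc : Continuous C := continuous_iff_continuousAt.2 fun x => (hC x).continuousAt
  have hℓc : Continuous ℓ := continuous_iff_continuousAt.2 fun x => (hℓ x).continuousAt
  have hG : ∀ x,
      HasDerivAt (fun y => (ℓ y - y) * C y) ((ℓ' x - 1) * C x + (ℓ x - x) * C' x) x :=
    fun x => ((hℓ x).sub (hasDerivAt_id x)).mul (hC x)
  have hG_int : ∫ x in a..b, ((ℓ' x - 1) * C x + (ℓ x - x) * C' x) = 0 := by
    rw [intervalIntegral.integral_eq_sub_of_hasDerivAt (fun x _ => hG x)
      (by apply Continuous.intervalIntegrable; fun_prop), ha, hb]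
    ring
  rw [← zero_add (∫ x in a..b, C x), ← hG_int, ← intervalIntegral.integral_add
    (by apply Continuous.intervalIntegrable; fun_prop) (hCc.intervalIntegrable _ _)]
  congr 1 with x
  ring

set_option maxHeartbeats 400000 in
/-- (Closed-form second-order average, Eqs. (7) and (9) of the paper.)
The mean-anomaly average of the known second-order term `H̃′₀,₂/(H₀₀R⁴/p⁴)` of the
Lie-transforms normalization of the main problem reproduces Brouwer's second-order
Hamiltonian after the elimination of short-period terms. -/
theorem second_order_average_closed_form
    (e η g s : ℝ) (he0 : 0 ≤ e) (he1 : e < 1)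
    (hη : η = Real.sqrt (1 - e ^ 2))
    (ℓ : ℝ → ℝ)
    (hℓ : ∀ f : ℝ, ℓ f =
      f - 2 * Real.arctan (e * Real.sin f / (1 + η + e * Real.cos f))
        - e * η * Real.sin f / (1 + e * Real.cos f))
    (S₁ P₁ P₂ P₃ P : ℝ → ℝ)
    (hS₁ : ∀ f : ℝ, S₁ f =
      -- i = 0 terms
      (10 * (7 * s ^ 4 - 16 * s ^ 2 + 8)) * Real.cos (0 * f + 0 * g) +
      (10 * (7 * s ^ 4 - 16 * s ^ 2 + 8)) * η * Real.cos (0 * f + 0 * g) +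
      (2 * (5 * s ^ 4 + 8 * s ^ 2 - 8)) * η ^ 2 * Real.cos (0 * f + 0 * g) +
      (2 * (5 * s ^ 4 + 8 * s ^ 2 - 8)) * η ^ 3 * Real.cos (0 * f + 0 * g) +
      (2 * (57 * s ^ 4 - 124 * s ^ 2 + 60)) * e * Real.cos (1 * f + 0 * g) +
      (4 * (15 * s ^ 4 - 44 * s ^ 2 + 24)) * η * e * Real.cos (1 * f + 0 * g) +
      (2 * (3 * s ^ 2 - 2) ^ 2) * η ^ 2 * e * Real.cos (1 * f + 0 * g) +
      (2 * (31 * s ^ 4 - 56 * s ^ 2 + 24)) * e ^ 2 * Real.cos (2 * f + 0 * g) +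
      (-2 * (5 * s ^ 4 + 8 * s ^ 2 - 8)) * η * e ^ 2 * Real.cos (2 * f + 0 * g) +
      (2 * (3 * s ^ 2 - 2) ^ 2) * e ^ 3 * Real.cos (3 * f + 0 * g) +
      -- i = 1 terms
      (2 - 3 * s ^ 2) * s ^ 2 * e ^ 3 * Real.cos (-1 * f + 2 * g) +
      (4 * (15 * s ^ 2 - 14)) * s ^ 2 * e ^ 2 * Real.cos (0 * f + 2 * g) +
      (4 * (15 * s ^ 2 - 14)) * s ^ 2 * η * e ^ 2 * Real.cos (0 * f + 2 * g) +
      (3 * (37 * s ^ 2 - 38)) * s ^ 2 * e * Real.cos (1 * f + 2 * g) +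
      (12 * (7 * s ^ 2 - 8)) * s ^ 2 * η * e * Real.cos (1 * f + 2 * g) +
      (-5 * (3 * s ^ 2 - 2)) * s ^ 2 * η ^ 2 * e * Real.cos (1 * f + 2 * g) +
      (-16 * (4 * s ^ 2 - 1)) * s ^ 2 * Real.cos (2 * f + 2 * g) +
      (-16 * (4 * s ^ 2 - 1)) * s ^ 2 * η * Real.cos (2 * f + 2 * g) +
      (-8 * (s ^ 2 - 2)) * s ^ 2 * η ^ 2 * Real.cos (2 * f + 2 * g) +
      (-8 * (s ^ 2 - 2)) * s ^ 2 * η ^ 3 * Real.cos (2 * f + 2 * g) +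
      (150 - 221 * s ^ 2) * s ^ 2 * e * Real.cos (3 * f + 2 * g) +
      (-4 * (35 * s ^ 2 - 24)) * s ^ 2 * η * e * Real.cos (3 * f + 2 * g) +
      (2 - 3 * s ^ 2) * s ^ 2 * η ^ 2 * e * Real.cos (3 * f + 2 * g) +
      (-4 * (31 * s ^ 2 - 22)) * s ^ 2 * e ^ 2 * Real.cos (4 * f + 2 * g) +
      (-4 * (13 * s ^ 2 - 10)) * s ^ 2 * η * e ^ 2 * Real.cos (4 * f + 2 * g) +
      (-5 * (3 * s ^ 2 - 2)) * s ^ 2 * e ^ 3 * Real.cos (5 * f + 2 * g) +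
      -- i = 2 terms
      5 * s ^ 4 * e ^ 2 * Real.cos (2 * f + 4 * g) +
      5 * s ^ 4 * η * e ^ 2 * Real.cos (2 * f + 4 * g) +
      6 * s ^ 4 * e * Real.cos (3 * f + 4 * g) +
      6 * s ^ 4 * η * e * Real.cos (3 * f + 4 * g) +
      (-6) * s ^ 4 * Real.cos (4 * f + 4 * g) +
      (-6) * s ^ 4 * η * Real.cos (4 * f + 4 * g) +
      (-2) * s ^ 4 * η ^ 2 * Real.cos (4 * f + 4 * g) +
      (-2) * s ^ 4 * η ^ 3 * Real.cos (4 * f + 4 * g) +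
      (-10) * s ^ 4 * e * Real.cos (5 * f + 4 * g) +
      (-10) * s ^ 4 * η * e * Real.cos (5 * f + 4 * g) +
      (-3) * s ^ 4 * e ^ 2 * Real.cos (6 * f + 4 * g) +
      (-3) * s ^ 4 * η * e ^ 2 * Real.cos (6 * f + 4 * g))
    (hP₁ : ∀ f : ℝ, P₁ f =
      3 / 64 * (η ^ 2 / (1 + η)) * ((1 + e * Real.cos f) ^ 2 / η ^ 4) * S₁ f)
    (hP₂ : ∀ f : ℝ, P₂ f =
      3 / 8 * η *
        (η * (3 * s ^ 2 - 2) ^ 2 +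
          3 * (5 * s ^ 2 - 4) * s ^ 2 *
            (e * Real.cos (f + 2 * g) + Real.cos (2 * f + 2 * g) +
              e / 3 * Real.cos (3 * f + 2 * g))))
    (hP₃ : ∀ f : ℝ, P₃ f =
      9 / 8 * (5 * s ^ 2 - 4) * s ^ 2 * ((1 + e * Real.cos f) ^ 2 / η ^ 2) *
        (f - ℓ f) *
        (e * Real.sin (f + 2 * g) + 2 * Real.sin (2 * f + 2 * g) +
          e * Real.sin (3 * f + 2 * g)))
    (hP : ∀ f : ℝ, P f = P₁ f + P₂ f + P₃ f) :
    (1 / (2 * Real.pi)) *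
      ∫ f in (0 : ℝ)..(2 * Real.pi), P f * (η ^ 3 / (1 + e * Real.cos f) ^ 2)
    = 3 / 32 * η *
        (5 * (7 * s ^ 4 - 16 * s ^ 2 + 8) + η * (6 * s ^ 2 - 4) ^ 2 +
          η ^ 2 * (5 * s ^ 4 + 8 * s ^ 2 - 8)) +
      3 / 16 * η * (15 * s ^ 2 - 14) * s ^ 2 * e ^ 2 * Real.cos (2 * g) := by
  have he : |e| < 1 := abs_lt.2 ⟨by linarith, he1⟩
  have hη₀ : 0 < η := hη ▸ sqrt_pos.2 (by nlinarith)
  have hℓ_eq : ℓ = meanAnomaly e := funext fun f => by rw [hℓ, hη]; rfl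
  have hℓ' : ∀ x, HasDerivAt ℓ (η ^ 3 / (1 + e * cos x) ^ 2) x := by
    rw [hℓ_eq, hη]; exact hasDerivAt_meanAnomaly he
  have hℓc : Continuous ℓ := continuous_iff_continuousAt.2 fun x => (hℓ' x).continuousAt
  have hw : Continuous fun x => η ^ 3 / (1 + e * cos x) ^ 2 :=
    continuous_const.div (by fun_prop) fun x => pow_ne_zero 2 (one_add_mul_cos_pos he x).ne'
  have hsplit : ∀ f, P f * (η ^ 3 / (1 + e * cos f) ^ 2) =
      3 / 64 * (η / (1 + η)) * S₁ f
        + 3 / 8 * η ^ 2 * (3 * s ^ 2 - 2) ^ 2 * (η ^ 3 / (1 + e * cos f) ^ 2)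
        + 9 / 8 * (5 * s ^ 2 - 4) * s ^ 2 * η *
          (harmonicSum e g f * (η ^ 3 / (1 + e * cos f) ^ 2) + (ℓ f - f) *
            -(e * sin (f + 2 * g) + 2 * sin (2 * f + 2 * g) + e * sin (3 * f + 2 * g))) := by
    intro f
    have := (one_add_mul_cos_pos he f).ne'
    rw [hP, hP₁, hP₂, hP₃, harmonicSum]
    field_simp
    ring
  have hS₁_int : ∫ f in (0 : ℝ)..2 * π, S₁ f =
      2 * π * (10 * (7 * s ^ 4 - 16 * s ^ 2 + 8) * (1 + η)
      + 2 * (5 * s ^ 4 + 8 * s ^ 2 - 8) * (η ^ 2 + η ^ 3)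
      + 4 * (15 * s ^ 2 - 14) * s ^ 2 * e ^ 2 * (1 + η) * cos (2 * g)) := by
    simp only [hS₁]
    simp (disch := (apply Continuous.intervalIntegrable; fun_prop)) only
      [intervalIntegral.integral_add, intervalIntegral.integral_const_mul]
    simp (disch := norm_num) only [integral_cos_mul_add_of_fract_eq_zero]
    norm_num
    ring
  have hS₁c : Continuous S₁ := by rw [funext hS₁]; fun_prop
  have hCc : Continuous (harmonicSum e g) := by unfold harmonicSum; fun_prop
  have hw_int : ∫ f in (0 : ℝ)..2 * π, η ^ 3 / (1 + e * cos f) ^ 2 = 2 * π := by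
    rw [intervalIntegral.integral_eq_sub_of_hasDerivAt (fun x _ => hℓ' x)
      (hw.intervalIntegrable _ _), hℓ_eq, meanAnomaly_two_pi, meanAnomaly_zero, sub_zero]
  have hC_int := integral_mul_deriv_add_sub_mul_deriv hℓ' (hasDerivAt_harmonicSum e g) hw
    (by fun_prop) (by rw [hℓ_eq, meanAnomaly_zero]) (by rw [hℓ_eq, meanAnomaly_two_pi])
  rw [intervalIntegral.integral_congr fun f _ => hsplit f, intervalIntegral.integral_add,
    intervalIntegral.integral_add, intervalIntegral.integral_const_mul,
    intervalIntegral.integral_const_mul, intervalIntegral.integral_const_mul, hS₁_int, hw_int,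
    hC_int, integral_harmonicSum]
  · field_simp
    ring
  all_goals apply Continuous.intervalIntegrable; fun_prop
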